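/- arXiv:2604.14903 — 2 statements merged into one kernel-verified Lean document; each statement's English description precedes it below -/
import Mathlib

section
/- Let w ∈ F be a nontrivial element of the free group F on basis X, let π : F → Γ be an epimorphism with w ∈ ker(π), and let φ : F → Sym(Ω) be homomorphism into the symmetric group of a nonempty finite set with φ(w) ≠ id. If 0 < ε < d_Ω(φ(w), id)/|w|, then there is no homomorphism θ : Γ → Sym(Ω) with d_Ω(φ(x), (θ∘π)(x)) < ε for all x ∈ X. (I.e., φ is not ε-close to any solution for ker(π).) -/
/-- The normalized Hamming distance on the symmetric group of a finite set. -/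
noncomputable def permHamming {Ω : Type*} [Fintype Ω] [DecidableEq Ω]
    (σ τ : Equiv.Perm Ω) : ℝ :=
  (Finset.univ.filter fun ω => σ ω ≠ τ ω).card / Fintype.card Ω

section Aux
variable {Ω : Type*} [Fintype Ω] [DecidableEq Ω]

lemma permHamming_triangle (σ ρ τ : Equiv.Perm Ω) :
    permHamming σ τ ≤ permHamming σ ρ + permHamming ρ τ := by
  unfold permHamming
  rw [← add_div]
  have hc : (0:ℝ) ≤ Fintype.card Ω := Nat.cast_nonneg _
  rcases eq_or_lt_of_le hc with hc0 | hc0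
  · rw [← hc0]; simp
  rw [div_le_div_iff_of_pos_right hc0]
  push_cast
  calc ((Finset.univ.filter fun ω => σ ω ≠ τ ω).card : ℝ)
      ≤ (((Finset.univ.filter fun ω => σ ω ≠ ρ ω) ∪
          (Finset.univ.filter fun ω => ρ ω ≠ τ ω)).card : ℝ) := by
        exact_mod_cast Finset.card_le_card (by
          intro ω hω
          simp only [Finset.mem_union, Finset.mem_filter, Finset.mem_univ, true_and] at *
          by_contra hc
          push_neg at hc
          exact hω (hc.1.trans hc.2))
    _ ≤ _ := by exact_mod_cast Finset.card_union_le _ _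

lemma permHamming_right_inv (σ τ ρ : Equiv.Perm Ω) :
    permHamming (σ * ρ) (τ * ρ) = permHamming σ τ := by
  unfold permHamming
  congr 2
  apply Finset.card_bij (fun a _ => ρ a)
  · intro a ha
    simp only [Finset.mem_filter, Finset.mem_univ, true_and, Equiv.Perm.mul_apply] at *
    exact (Finset.mem_filter.mp ha).2
  · intro a _ b _ h
    exact ρ.injective h
  · intro b hb
    refine ⟨ρ.symm b, ?_, by simp⟩
    simp only [Finset.mem_filter, Finset.mem_univ, true_and, Equiv.Perm.mul_apply,
      Equiv.apply_symm_apply] at *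
    exact Finset.mem_filter.mpr ⟨Finset.mem_univ _, by simpa using hb⟩

lemma permHamming_left_inv (ρ σ τ : Equiv.Perm Ω) :
    permHamming (ρ * σ) (ρ * τ) = permHamming σ τ := by
  unfold permHamming
  congr 2
  simp [Equiv.Perm.mul_apply]

lemma permHamming_comm (σ τ : Equiv.Perm Ω) : permHamming σ τ = permHamming τ σ := by
  unfold permHamming
  congr 2
  simp [ne_comm]

lemma permHamming_inv (σ τ : Equiv.Perm Ω) :
    permHamming σ⁻¹ τ⁻¹ = permHamming σ τ := by
  calc permHamming σ⁻¹ τ⁻¹ = permHamming (σ * σ⁻¹) (σ * τ⁻¹) := (permHamming_left_inv σ _ _).symm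
    _ = permHamming (σ * σ⁻¹ * τ) (σ * τ⁻¹ * τ) := (permHamming_right_inv _ _ τ).symm
    _ = permHamming τ σ := by group
    _ = permHamming σ τ := permHamming_comm τ σ

lemma permHamming_mul_le (σ₁ σ₂ τ₁ τ₂ : Equiv.Perm Ω) :
    permHamming (σ₁ * σ₂) (τ₁ * τ₂) ≤ permHamming σ₁ τ₁ + permHamming σ₂ τ₂ := by
  calc permHamming (σ₁ * σ₂) (τ₁ * τ₂)
      ≤ permHamming (σ₁ * σ₂) (τ₁ * σ₂) + permHamming (τ₁ * σ₂) (τ₁ * τ₂) :=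
        permHamming_triangle _ _ _
    _ = _ := by rw [permHamming_right_inv, permHamming_left_inv]

lemma permHamming_self (σ : Equiv.Perm Ω) : permHamming σ σ = 0 := by
  simp [permHamming]

lemma permHamming_list_bound {X : Type*} (φ ψ : FreeGroup X →* Equiv.Perm Ω) (ε : ℝ)
    (h : ∀ x : X, permHamming (φ (FreeGroup.of x)) (ψ (FreeGroup.of x)) ≤ ε) :
    ∀ L : List (X × Bool),
      permHamming (φ (FreeGroup.mk L)) (ψ (FreeGroup.mk L)) ≤ L.length * ε := by
  intro L
  induction L with
  | nil =>
      simp only [List.length_nil, Nat.cast_zero, zero_mul]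
      have : FreeGroup.mk ([] : List (X × Bool)) = 1 := rfl
      rw [this]
      simp [permHamming_self]
  | cons p L ih =>
      have hsplit : FreeGroup.mk (p :: L) = FreeGroup.mk [p] * FreeGroup.mk L := by
        rw [FreeGroup.mul_mk]
        rfl
      have hsingle : permHamming (φ (FreeGroup.mk [p])) (ψ (FreeGroup.mk [p])) ≤ ε := by
        obtain ⟨x, b⟩ := p
        cases b
        · have : FreeGroup.mk [(x, false)] = (FreeGroup.of x)⁻¹ := by
            rw [show FreeGroup.of x = FreeGroup.mk [(x, true)] from rfl, FreeGroup.inv_mk]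
            simp [FreeGroup.invRev]
          rw [this, map_inv, map_inv, permHamming_inv]
          exact h x
        · exact h x
      calc permHamming (φ (FreeGroup.mk (p :: L))) (ψ (FreeGroup.mk (p :: L)))
          ≤ permHamming (φ (FreeGroup.mk [p])) (ψ (FreeGroup.mk [p])) +
            permHamming (φ (FreeGroup.mk L)) (ψ (FreeGroup.mk L)) := by
            rw [hsplit, map_mul, map_mul]
            exact permHamming_mul_le _ _ _ _
        _ ≤ ε + L.length * ε := add_le_add hsingle ih
        _ = (p :: L).length * ε := by simp [List.length_cons]; push_cast; ring

end Aux

theorem not_close_to_solution {X : Type*} [Fintype X] [DecidableEq X]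
    {Ω : Type*} [Fintype Ω] [DecidableEq Ω] [Nonempty Ω]
    {Γ : Type*} [Group Γ] (π : FreeGroup X →* Γ) (hπ : Function.Surjective π)
    (w : FreeGroup X) (hw : w ≠ 1) (hwker : π w = 1)
    (φ : FreeGroup X →* Equiv.Perm Ω) (hφw : φ w ≠ 1) (ε : ℝ) (hε : 0 < ε)
    (hεlt : ε < permHamming (φ w) 1 / (FreeGroup.toWord w).length) :
    ¬ ∃ θ : Γ →* Equiv.Perm Ω,
        ∀ x : X, permHamming (φ (FreeGroup.of x)) (θ (π (FreeGroup.of x))) < ε := by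
  rintro ⟨θ, hθ⟩
  set ψ : FreeGroup X →* Equiv.Perm Ω := θ.comp π with hψ
  have hψ1 : ψ w = 1 := by simp [hψ, hwker]
  have hx : ∀ x : X, permHamming (φ (FreeGroup.of x)) (ψ (FreeGroup.of x)) ≤ ε :=
    fun x => (hθ x).le
  have hbound := permHamming_list_bound φ ψ ε hx (FreeGroup.toWord w)
  rw [FreeGroup.mk_toWord, hψ1] at hbound
  have hn : 0 < ((FreeGroup.toWord w).length : ℝ) := by
    have : FreeGroup.toWord w ≠ [] := by
      intro hnil
      apply hw
      rw [← FreeGroup.toWord_eq_nil_iff]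
      exact hnil
    exact_mod_cast List.length_pos_iff.mpr this
  have hlt : ε * (FreeGroup.toWord w).length < permHamming (φ w) 1 :=
    (lt_div_iff₀ hn).mp hεlt
  nlinarith [hbound, hlt]
end

section
/- If H is an almost-normal subgroup of the wreath product W = C₃ ≀ ℤ (i.e., the normalizer N_W(H) has finite index in W) and H is not contained in the base group B(W) = ⊕_ℤ C₃, then H has finite index in W. -/
/-- The shift action of an additive group `A` on the base group `⊕_A C₃`
(written additively as `A →₀ ZMod 3`) of the lamplighter group `C₃ ≀ A`:
the element `n` acts by translating coordinates. -/
noncomputable def lampShift (A : Type*) [AddCommGroup A] :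
    Multiplicative A →* MulAut (Multiplicative (A →₀ ZMod 3)) where
  toFun n := AddEquiv.toMultiplicative (Finsupp.domCongr (Equiv.addRight n.toAdd))
  map_one' := by
    apply MulEquiv.ext
    intro f
    apply Multiplicative.toAdd.injective
    ext a
    simp [Finsupp.equivMapDomain, Equiv.addRight]
  map_mul' := by
    intro m n
    apply MulEquiv.ext
    intro f
    apply Multiplicative.toAdd.injective
    ext a
    simp [Finsupp.equivMapDomain, Equiv.addRight, sub_sub]
    congr 1
    abel

/-- The lamplighter group `W = C₃ ≀ ℤ` as a semidirect product
`(⊕_ℤ C₃) ⋊ ℤ`, with `ℤ` acting by shifting coordinates. -/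
noncomputable abbrev Lamplighter :=
  SemidirectProduct (Multiplicative (ℤ →₀ ZMod 3)) (Multiplicative ℤ) (lampShift ℤ)

/-- The base group `B(W) = ⊕_ℤ C₃` of the lamplighter group. -/
noncomputable abbrev lampBase : Subgroup Lamplighter := SemidirectProduct.inl.range



open Finsupp
open scoped Pointwise

namespace LampAux

abbrev M := ℤ →₀ ZMod 3

/-- shift by `n` -/
noncomputable def σ (n : ℤ) : M ≃+ M := Finsupp.domCongr (Equiv.addRight n)

/-- `1 - σ^n` -/
noncomputable def ψ (n : ℤ) : M →+ M := AddMonoidHom.id M - (σ n).toAddMonoidHom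

lemma σ_single (n a : ℤ) (r : ZMod 3) : σ n (single a r) = single (a + n) r := by
  simp only [σ, Finsupp.domCongr_apply, equivMapDomain_single, Equiv.coe_addRight]

lemma σ_apply (n : ℤ) (f : M) (a : ℤ) : σ n f a = f (a - n) := by
  simp only [σ, Finsupp.domCongr_apply, Finsupp.equivMapDomain_apply, Equiv.addRight_symm]
  rfl

lemma ψ_apply (n : ℤ) (f : M) : ψ n f = f - σ n f := rfl

lemma ψ_single (n a : ℤ) (r : ZMod 3) :
    ψ n (single a r) = single a r - single (a + n) r := by
  rw [ψ_apply, σ_single]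

lemma ψ_injective {n : ℤ} (hn : n ≠ 0) : Function.Injective (ψ n) := by
  rw [injective_iff_map_eq_zero]
  intro f hf
  have hfe : ∀ a : ℤ, f a = f (a - n) := by
    intro a
    have := congrArg (fun g : M => g a) hf
    simp only [ψ_apply, Finsupp.sub_apply, σ_apply, Finsupp.coe_zero, Pi.zero_apply] at this
    exact sub_eq_zero.mp this
  by_contra hne
  obtain ⟨a, ha⟩ := Finsupp.ne_iff.mp hne
  simp only [Finsupp.coe_zero, Pi.zero_apply] at ha
  have key : ∀ k : ℕ, f (a - k * n) ≠ 0 := by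
    intro k
    induction k with
    | zero => simpa using ha
    | succ k ih =>
      have := hfe (a - k * n)
      rw [this] at ih
      convert ih using 2
      push_cast
      ring
  have hinj : Function.Injective (fun k : ℕ => a - k * n) := by
    intro k l hkl
    simp only at hkl
    have : (k : ℤ) * n = l * n := by omega
    exact_mod_cast mul_right_cancel₀ hn this
  have hmem : ∀ k : ℕ, a - k * n ∈ (f.support : Set ℤ) := by
    intro k
    simpa [Finsupp.mem_support_iff] using key k
  exact (Set.infinite_of_injective_forall_mem hinj hmem) f.support.finite_toSet


lemma single_sub_single_mem (n : ℤ) (k : ℤ) (a : ℤ) (r : ZMod 3) :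
    single a r - single (a + k * n) r ∈ (ψ n).range := by
  induction k using Int.induction_on with
  | zero =>
    rw [show a + 0 * n = a by ring, sub_self]
    exact zero_mem _
  | succ k ih =>
    have h1 : ψ n (single (a + k * n) r) ∈ (ψ n).range := ⟨_, rfl⟩
    rw [ψ_single] at h1
    have h2 := AddSubgroup.add_mem _ ih h1
    rw [sub_add_sub_cancel] at h2
    rw [show a + ((k : ℤ) + 1) * n = a + (k : ℤ) * n + n by ring]
    exact h2
  | pred k ih =>
    have h1 : ψ n (single (a + (-(k : ℤ) - 1) * n) r) ∈ (ψ n).range := ⟨_, rfl⟩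
    rw [ψ_single] at h1
    rw [show a + (-(k:ℤ) - 1) * n + n = a + -(k:ℤ) * n by ring] at h1
    have h2 := AddSubgroup.sub_mem _ ih h1
    rw [sub_sub_sub_cancel_right] at h2
    exact h2

lemma sub_mapDomain_emod_mem (n : ℤ) (f : M) :
    f - mapDomain (fun a => a.emod n) f ∈ (ψ n).range := by
  induction f using Finsupp.induction_linear with
  | zero =>
    simp only [mapDomain_zero, sub_self]
    exact zero_mem _
  | add f g hf hg =>
    rw [mapDomain_add]
    have := AddSubgroup.add_mem _ hf hg
    convert this using 1
    abel
  | single a b =>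
    rw [mapDomain_single]
    have e : a.emod n = a + (-(a.ediv n)) * n := by
      have h : a.emod n + n * a.ediv n = a := Int.emod_add_mul_ediv a n
      linarith [mul_comm (a.ediv n) n]
    rw [e]
    exact single_sub_single_mem n _ a b


noncomputable def Φ (m : ℕ) : M →+ (ZMod m →₀ ZMod 3) :=
  mapDomain.addMonoidHom (fun a : ℤ => (a : ZMod m))

lemma mapDomain_emod_eq_zero {n : ℤ} (hn : 0 < n) (f : M) (hf : Φ n.toNat f = 0) :
    mapDomain (fun a => a.emod n) f = 0 := by
  classical
  set m := n.toNat with hm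
  have hnm : (m : ℤ) = n := Int.toNat_of_nonneg hn.le
  set h := mapDomain (fun a : ℤ => a.emod n) f with hh
  have hcast : ∀ a : ℤ, ((a.emod n : ℤ) : ZMod m) = (a : ZMod m) := by
    intro a
    rw [ZMod.intCast_eq_intCast_iff' _ _ _]
    show (a.emod n).emod (m : ℤ) = a.emod (m : ℤ)
    rw [hnm]
    exact Int.emod_emod_of_dvd a dvd_rfl
  have hΦ : Φ m f = mapDomain (fun x : ℤ => (x : ZMod m)) h := by
    rw [hh, ← mapDomain_comp]
    show mapDomain _ f = mapDomain _ f
    congr 1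
    funext a
    exact (hcast a).symm
  have hS : (h.support : Set ℤ) ⊆ {x : ℤ | x.emod n = x} := by
    intro b hb
    have := mapDomain_support (f := fun a : ℤ => a.emod n) (s := f) hb
    obtain ⟨c, _, rfl⟩ := Finset.mem_image.mp this
    exact Int.emod_emod_of_dvd c dvd_rfl
  have hinj : Set.InjOn (fun x : ℤ => (x : ZMod m)) {x : ℤ | x.emod n = x} := by
    intro x hx y hy hxy
    have hmod : x.emod (m : ℤ) = y.emod (m : ℤ) := (ZMod.intCast_eq_intCast_iff' _ _ _).mp hxy
    rw [hnm] at hmod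
    rw [← hx, ← hy]
    exact hmod
  ext b
  by_cases hb : b ∈ h.support
  · have hbS := hS hb
    have := mapDomain_apply' {x : ℤ | x.emod n = x} h hS hinj hbS
    rw [← hΦ, hf] at this
    simpa using this.symm
  · simpa using Finsupp.notMem_support_iff.mp hb

lemma range_index_ne_zero {n : ℤ} (hn : 0 < n) : (ψ n).range.index ≠ 0 := by
  haveI : NeZero n.toNat := ⟨by omega⟩
  have hle : (Φ n.toNat).ker ≤ (ψ n).range := by
    intro f hf
    have hf' : Φ n.toNat f = 0 := hf
    have h0 := mapDomain_emod_eq_zero hn f hf'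
    have h1 := sub_mapDomain_emod_mem n f
    rwa [h0, sub_zero] at h1
  have hdvd : (ψ n).range.index ∣ (Φ n.toNat).ker.index := AddSubgroup.index_dvd_of_le hle
  have hker : (Φ n.toNat).ker.index = Nat.card (Φ n.toNat).range := AddSubgroup.index_ker _
  have : Nat.card (Φ n.toNat).range ≠ 0 := Nat.card_pos.ne'
  intro h0
  rw [h0] at hdvd
  exact this (hker ▸ Nat.eq_zero_of_zero_dvd hdvd)


lemma σ_σ (k m : ℤ) (x : M) : σ k (σ m x) = σ (m + k) x := by
  ext a
  simp only [σ_apply]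
  congr 1
  ring

lemma σ_zero (x : M) : σ 0 x = x := by
  ext a
  simp [σ_apply]

lemma relindex_sup_ne_zero {G : Type*} [Group G] {H B : Subgroup G} [hB : B.Normal]
    (h : H.relIndex B ≠ 0) : H.relIndex (H ⊔ B) ≠ 0 := by
  haveI hfin : Finite (B ⧸ H.subgroupOf B) := Nat.finite_of_card_ne_zero h
  let incl : B → (H ⊔ B : Subgroup G) := fun b => ⟨b, (le_sup_right : B ≤ H ⊔ B) b.2⟩
  let q : B ⧸ H.subgroupOf B → (H ⊔ B : Subgroup G) ⧸ H.subgroupOf (H ⊔ B) :=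
    Quotient.map' incl (by
      intro b₁ b₂ hb
      rw [QuotientGroup.leftRel_apply] at hb ⊢
      rw [Subgroup.mem_subgroupOf] at hb ⊢
      exact hb)
  have hsurj : Function.Surjective q := by
    intro x
    refine QuotientGroup.induction_on x ?_
    intro z
    have hz : (z : G) ∈ (↑B : Set G) * (↑H : Set G) := by
      have hz1 : (z : G) ∈ (B ⊔ H : Subgroup G) := by
        rw [sup_comm]; exact z.2
      rwa [← SetLike.mem_coe, Subgroup.normal_mul] at hz1
    obtain ⟨b, hb, t, ht, hbt⟩ := hz
    refine ⟨QuotientGroup.mk ⟨b, hb⟩, ?_⟩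
    show QuotientGroup.mk (incl ⟨b, hb⟩) = QuotientGroup.mk z
    rw [QuotientGroup.eq, Subgroup.mem_subgroupOf]
    show (b⁻¹ * (z : G)) ∈ H
    rw [← hbt, inv_mul_cancel_left]
    exact ht
  haveI : Finite ((H ⊔ B : Subgroup G) ⧸ H.subgroupOf (H ⊔ B)) := Finite.of_surjective q hsurj
  exact Nat.card_pos.ne'

end LampAux

/-- An almost-normal subgroup of `C₃ ≀ ℤ` which is not contained in the base
group has finite index. -/
theorem almostNormal_not_le_base_finiteIndex (H : Subgroup Lamplighter)
    (hAN : (Subgroup.normalizer (H : Set Lamplighter)).FiniteIndex) (hnb : ¬ H ≤ lampBase) :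
    H.FiniteIndex := by
  classical
  haveI := hAN
  -- base is normal
  haveI hBnormal : lampBase.Normal := by
    rw [lampBase, SemidirectProduct.range_inl_eq_ker_rightHom]
    exact MonoidHom.normal_ker _
  -- pick an element of H with positive shift
  obtain ⟨w0, hw0H, hw0B⟩ := SetLike.not_le_iff_exists.mp hnb
  have hw0r : Multiplicative.toAdd (SemidirectProduct.rightHom w0) ≠ 0 := by
    intro h0
    apply hw0B
    rw [lampBase, SemidirectProduct.range_inl_eq_ker_rightHom]
    show SemidirectProduct.rightHom w0 = 1
    rw [← ofAdd_toAdd (SemidirectProduct.rightHom w0), h0, ofAdd_zero]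
  obtain ⟨w, hwH, hwpos⟩ : ∃ w ∈ H, 0 < Multiplicative.toAdd (SemidirectProduct.rightHom w) := by
    rcases hw0r.lt_or_gt with hlt | hgt
    · refine ⟨w0⁻¹, inv_mem hw0H, ?_⟩
      rw [map_inv, toAdd_inv]
      omega
    · exact ⟨w0, hw0H, hgt⟩
  set n : ℤ := Multiplicative.toAdd (SemidirectProduct.rightHom w) with hndef
  have hσ : ∀ (r : Multiplicative ℤ) (x : Multiplicative LampAux.M),
      Multiplicative.toAdd (lampShift ℤ r x) = LampAux.σ (Multiplicative.toAdd r) (Multiplicative.toAdd x) :=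
    fun r x => rfl
  -- the commutator trick
  have key : ∀ g : Multiplicative LampAux.M, SemidirectProduct.inl g ∈ (Subgroup.normalizer (H : Set Lamplighter)) →
      SemidirectProduct.inl (Multiplicative.ofAdd (LampAux.ψ n (Multiplicative.toAdd g))) ∈ H := by
    intro g hg
    have h1 : SemidirectProduct.inl g * w * (SemidirectProduct.inl g)⁻¹ ∈ H :=
      (Subgroup.mem_normalizer_iff.mp hg w).mp hwH
    have h2 : SemidirectProduct.inl g * w * (SemidirectProduct.inl g)⁻¹ * w⁻¹ ∈ H :=
      mul_mem h1 (inv_mem hwH)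
    have heq : SemidirectProduct.inl g * w * (SemidirectProduct.inl g)⁻¹ * w⁻¹
        = SemidirectProduct.inl (Multiplicative.ofAdd (LampAux.ψ n (Multiplicative.toAdd g))) := by
      have hπw : w.right = SemidirectProduct.rightHom w := rfl
      ext
      · show _ = _
        apply Multiplicative.toAdd.injective
        simp only [SemidirectProduct.mul_left, SemidirectProduct.inv_left,
          SemidirectProduct.mul_right, SemidirectProduct.inv_right,
          SemidirectProduct.left_inl, SemidirectProduct.right_inl, map_one, map_mul, map_inv,
          inv_one, mul_one, one_mul, toAdd_mul, toAdd_inv, toAdd_ofAdd, hσ, LampAux.ψ_apply]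
        simp only [MulAut.one_apply]
        rw [show ((lampShift ℤ) w.right)⁻¹ = lampShift ℤ w.right⁻¹ from
          (map_inv (lampShift ℤ) w.right).symm]
        simp only [hσ, toAdd_inv]
        rw [hndef, ← hπw]
        simp only [LampAux.σ_σ, neg_add_cancel, LampAux.σ_zero]
        abel
      · show _ = _
        simp [SemidirectProduct.mul_right, SemidirectProduct.inv_right,
          SemidirectProduct.right_inl]
    rw [heq] at h2
    exact h2
  -- transfer to additive subgroups of the base
  set ι : Multiplicative LampAux.M →* Lamplighter := (SemidirectProduct.inl : _ →* Lamplighter) with hι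
  set TN : AddSubgroup LampAux.M := Subgroup.toAddSubgroup' ((Subgroup.normalizer (H : Set Lamplighter)).comap ι) with hTNdef
  set SH : AddSubgroup LampAux.M := Subgroup.toAddSubgroup' (H.comap ι) with hSHdef
  have hmap : TN.map (LampAux.ψ n) ≤ SH := by
    rintro x ⟨f, hf, rfl⟩
    have hf' : SemidirectProduct.inl (Multiplicative.ofAdd f) ∈ (Subgroup.normalizer (H : Set Lamplighter)) := hf
    exact key (Multiplicative.ofAdd f) hf'
  have hTN : TN.index ≠ 0 := by
    have h1 : AddSubgroup.toSubgroup TN = (Subgroup.normalizer (H : Set Lamplighter)).comap ι :=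
      AddSubgroup.toSubgroup.apply_symm_apply _
    rw [← AddSubgroup.index_toSubgroup TN, h1, Subgroup.index_comap]
    have h2 : ((Subgroup.normalizer (H : Set Lamplighter)).subgroupOf ι.range).FiniteIndex := inferInstance
    exact h2.index_ne_zero
  have hrange : (LampAux.ψ n).range.index ≠ 0 := LampAux.range_index_ne_zero hwpos
  have hSH : SH.index ≠ 0 := by
    have hd := AddSubgroup.index_dvd_of_le hmap
    have hmi : (TN.map (LampAux.ψ n)).index = TN.index * (LampAux.ψ n).range.index :=
      AddSubgroup.index_map_of_injective _ (LampAux.ψ_injective (by omega))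
    intro h0
    rw [h0] at hd
    exact (mul_ne_zero hTN hrange) (hmi ▸ Nat.eq_zero_of_zero_dvd hd)
  have hrelB : H.relIndex lampBase ≠ 0 := by
    have h1 : AddSubgroup.toSubgroup SH = H.comap ι := AddSubgroup.toSubgroup.apply_symm_apply _
    have h2 : H.relIndex lampBase = (H.comap ι).index := (Subgroup.index_comap H ι).symm
    rw [h2, ← h1, AddSubgroup.index_toSubgroup]
    exact hSH
  have hrelSup : H.relIndex (H ⊔ lampBase) ≠ 0 := LampAux.relindex_sup_ne_zero hrelB
  have hsup : (H ⊔ lampBase).index ≠ 0 := by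
    have hker : (SemidirectProduct.rightHom :
        Lamplighter →* Multiplicative ℤ).ker = lampBase :=
      (SemidirectProduct.range_inl_eq_ker_rightHom).symm
    have hmi : ((H ⊔ lampBase).map SemidirectProduct.rightHom).index = (H ⊔ lampBase).index := by
      rw [Subgroup.index_map, hker, sup_assoc, sup_idem,
        MonoidHom.range_eq_top_of_surjective _ SemidirectProduct.rightHom_surjective,
        Subgroup.index_top, mul_one]
    have hz : Subgroup.zpowers (SemidirectProduct.rightHom w) ≤
        (H ⊔ lampBase).map SemidirectProduct.rightHom :=
      Subgroup.zpowers_le.mpr ⟨w, (le_sup_left : H ≤ H ⊔ lampBase) hwH, rfl⟩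
    have hd := Subgroup.index_dvd_of_le hz
    have hzp : (Subgroup.zpowers (SemidirectProduct.rightHom w)).index ≠ 0 := by
      have he : Subgroup.zpowers (SemidirectProduct.rightHom w)
          = AddSubgroup.toSubgroup (AddSubgroup.zmultiples n) := by
        ext x
        rw [Subgroup.mem_zpowers_iff]
        show _ ↔ Multiplicative.toAdd x ∈ AddSubgroup.zmultiples n
        rw [Int.mem_zmultiples_iff]
        constructor
        · rintro ⟨k, rfl⟩
          exact ⟨k, by rw [toAdd_zpow, smul_eq_mul]; ring⟩
        · rintro ⟨k, hk⟩
          refine ⟨k, Multiplicative.toAdd.injective ?_⟩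
          rw [toAdd_zpow, smul_eq_mul, hk]
          ring
      rw [he, AddSubgroup.index_toSubgroup, Int.index_zmultiples]
      exact Int.natAbs_ne_zero.mpr (by omega)
    intro h0
    rw [hmi, h0] at hd
    exact hzp (Nat.eq_zero_of_zero_dvd hd)
  refine ⟨?_⟩
  rw [← Subgroup.relIndex_mul_index (le_sup_left : H ≤ H ⊔ lampBase)]
  exact mul_ne_zero hrelSup hsup
end
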